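/- arXiv:2009.14536 — 5 statements merged into one kernel-verified Lean document; each statement's English description precedes it below -/
import Mathlib

section
/- Let G be a finite nilpotent group and let x, y ∈ G. Then ⟨x, y⟩ = G if and only if for all g, h ∈ G, ⟨g⁻¹xg, h⁻¹yh⟩ = G. (In a nilpotent group, generation and invariable generation by conjugacy classes coincide.) -/
/-!
In a nilpotent group every maximal subgroup `M` is normal, and `M` together with any single
element outside it generates the group, so `G ⧸ M` is cyclic; hence the commutator subgroup lies
in the Frattini subgroup.
A conjugate `g⁻¹ * x * g` agrees with `x` modulo the commutator subgroup, so conjugating the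
generators changes the generated subgroup only modulo the Frattini subgroup, whose elements are
non-generators.
-/

open Subgroup
open scoped commutatorElement

section

variable {G : Type*} [Group G]

theorem Subgroup.commutator_le_of_isCoatom [Group.IsNilpotent G] {M : Subgroup G}
    (hM : IsCoatom M) : _root_.commutator G ≤ M := by
  have : M.Normal :=
    NormalizerCondition.normal_of_coatom M Group.normalizerCondition_of_isNilpotent hM
  obtain ⟨g, -, hg⟩ := SetLike.exists_of_lt hM.lt_top
  refine Normal.commutator_le_of_self_sup_commutative_eq_top (H := zpowers g) ?_ inferInstance
  exact hM.2 _ (left_lt_sup.2 fun h => hg (zpowers_le.1 h))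

theorem commutator_le_frattini [Group.IsNilpotent G] : commutator G ≤ frattini G :=
  le_iInf₂ fun _ => Subgroup.commutator_le_of_isCoatom

theorem Subgroup.eq_top_of_sup_commutator_eq_top [Finite G] [Group.IsNilpotent G]
    {H : Subgroup G} (hH : H ⊔ _root_.commutator G = ⊤) : H = ⊤ :=
  frattini_nongenerating (top_le_iff.1 (hH ▸ sup_le_sup_left commutator_le_frattini H))

theorem Subgroup.mem_sup_commutator_of_conj_mem {H : Subgroup G} {x g : G}
    (hx : g⁻¹ * x * g ∈ H) : x ∈ H ⊔ _root_.commutator G := by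
  have hxg : x = g⁻¹ * x * g * ⁅g⁻¹, x⁻¹⁆ := by group
  rw [hxg]
  exact mul_mem (mem_sup_left hx)
    (mem_sup_right (commutator_mem_commutator (mem_top _) (mem_top _)))

theorem Subgroup.eq_top_of_forall_conj_mem [Finite G] [Group.IsNilpotent G] {s : Set G}
    (hs : closure s = ⊤) {H : Subgroup G} (hH : ∀ x ∈ s, ∃ g : G, g⁻¹ * x * g ∈ H) :
    H = ⊤ := by
  refine eq_top_of_sup_commutator_eq_top (top_le_iff.1 ?_)
  rw [← hs, closure_le]
  intro x hx
  obtain ⟨g, hg⟩ := hH x hx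
  exact mem_sup_commutator_of_conj_mem hg

end

theorem nilpotent_generation_iff_invariable_generation (G : Type*) [Group G] [Finite G]
    [Group.IsNilpotent G] (x y : G) :
    Subgroup.closure ({x, y} : Set G) = ⊤ ↔
      ∀ g h : G, Subgroup.closure ({g⁻¹ * x * g, h⁻¹ * y * h} : Set G) = ⊤ := by
  refine ⟨fun hxy g h => eq_top_of_forall_conj_mem hxy ?_, fun h => by simpa using h 1 1⟩
  rintro z (rfl | rfl)
  · exact ⟨g, subset_closure (Set.mem_insert _ _)⟩
  · exact ⟨h, subset_closure (Set.mem_insert_of_mem _ rfl)⟩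
end

section
/- Let G be a finite group and suppose there exist proper subgroups H, K of G such that G equals the union of all conjugates of H together with all conjugates of K. If C and D are conjugacy classes of G such that every pair (c, d) ∈ C × D generates G, then one of C, D is contained in the union of conjugates of H and the other is contained in the union of conjugates of K. Moreover neither class is contained in both unions. -/
lemma conj_set_lemma {G : Type*} [Group G] (L : Subgroup G) (c : G)
    (h : ∃ g : G, g⁻¹ * c * g ∈ L) :
    conjugatesOf c ⊆ {x : G | ∃ g : G, g⁻¹ * x * g ∈ L} := by
  obtain ⟨g, hg⟩ := h
  rintro x hx
  rw [conjugatesOf, Set.mem_setOf_eq] at hx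
  obtain ⟨u, hu⟩ := isConj_iff.mp hx
  refine ⟨u * g, ?_⟩
  have : (u * g)⁻¹ * x * (u * g) = g⁻¹ * c * g := by
    rw [← hu]; group
  rw [this]; exact hg

lemma not_both_lemma {G : Type*} [Group G] (L : Subgroup G) (hL : L ≠ ⊤) (c d : G)
    (hgen : ∀ c' ∈ conjugatesOf c, ∀ d' ∈ conjugatesOf d,
      Subgroup.closure ({c', d'} : Set G) = ⊤)
    (hc : ∃ g : G, g⁻¹ * c * g ∈ L) (hd : ∃ g : G, g⁻¹ * d * g ∈ L) : False := by
  obtain ⟨g, hg⟩ := hc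
  obtain ⟨h, hh⟩ := hd
  have hc' : g⁻¹ * c * g ∈ conjugatesOf c := by
    rw [conjugatesOf, Set.mem_setOf_eq, isConj_iff]
    exact ⟨g⁻¹, by group⟩
  have hd' : h⁻¹ * d * h ∈ conjugatesOf d := by
    rw [conjugatesOf, Set.mem_setOf_eq, isConj_iff]
    exact ⟨h⁻¹, by group⟩
  have := hgen _ hc' _ hd'
  have hle : Subgroup.closure ({g⁻¹ * c * g, h⁻¹ * d * h} : Set G) ≤ L := by
    rw [Subgroup.closure_le]
    rintro x (rfl | rfl)
    · exact hg
    · exact hh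
  rw [this] at hle
  exact hL (top_le_iff.mp hle)

theorem two_covering_splits_invariably_generating_pair (G : Type*) [Group G] [Finite G]
    (H K : Subgroup G) (hH : H ≠ ⊤) (hK : K ≠ ⊤)
    (hcov : ∀ x : G, (∃ g : G, g⁻¹ * x * g ∈ H) ∨ (∃ g : G, g⁻¹ * x * g ∈ K))
    (c d : G)
    (hgen : ∀ c' ∈ conjugatesOf c, ∀ d' ∈ conjugatesOf d,
      Subgroup.closure ({c', d'} : Set G) = ⊤) :
    ((conjugatesOf c ⊆ {x : G | ∃ g : G, g⁻¹ * x * g ∈ H} ∧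
        conjugatesOf d ⊆ {x : G | ∃ g : G, g⁻¹ * x * g ∈ K}) ∨
      (conjugatesOf c ⊆ {x : G | ∃ g : G, g⁻¹ * x * g ∈ K} ∧
        conjugatesOf d ⊆ {x : G | ∃ g : G, g⁻¹ * x * g ∈ H})) ∧
    ¬(conjugatesOf c ⊆ {x : G | ∃ g : G, g⁻¹ * x * g ∈ H} ∧
        conjugatesOf c ⊆ {x : G | ∃ g : G, g⁻¹ * x * g ∈ K}) ∧
    ¬(conjugatesOf d ⊆ {x : G | ∃ g : G, g⁻¹ * x * g ∈ H} ∧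
        conjugatesOf d ⊆ {x : G | ∃ g : G, g⁻¹ * x * g ∈ K}) := by
  have hcself : c ∈ conjugatesOf c := mem_conjugatesOf_self
  have hdself : d ∈ conjugatesOf d := mem_conjugatesOf_self
  have nbH : ¬((∃ g : G, g⁻¹ * c * g ∈ H) ∧ (∃ g : G, g⁻¹ * d * g ∈ H)) := by
    rintro ⟨h1, h2⟩; exact not_both_lemma H hH c d hgen h1 h2
  have nbK : ¬((∃ g : G, g⁻¹ * c * g ∈ K) ∧ (∃ g : G, g⁻¹ * d * g ∈ K)) := by
    rintro ⟨h1, h2⟩; exact not_both_lemma K hK c d hgen h1 h2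
  refine ⟨?_, ?_, ?_⟩
  · rcases hcov c with hc | hc <;> rcases hcov d with hd | hd
    · exact absurd ⟨hc, hd⟩ nbH
    · exact Or.inl ⟨conj_set_lemma H c hc, conj_set_lemma K d hd⟩
    · exact Or.inr ⟨conj_set_lemma K c hc, conj_set_lemma H d hd⟩
    · exact absurd ⟨hc, hd⟩ nbK
  · rintro ⟨h1, h2⟩
    rcases hcov d with hd | hd
    · exact nbH ⟨h1 hcself, hd⟩
    · exact nbK ⟨h2 hcself, hd⟩
  · rintro ⟨h1, h2⟩
    rcases hcov c with hc | hc
    · exact nbH ⟨hc, h1 hdself⟩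
    · exact nbK ⟨hc, h2 hdself⟩
end

section
/- Let G be a noncyclic finite group. Then the clique number of the invariably generating graph Λ(G) of G is at most the normal covering number γ(G) of G, where γ(G) is the least number of proper subgroups of G such that every element of G lies in a conjugate of one of them. -/
/-- The clique number of the invariably generating graph is at most the normal
covering number: every clique of nontrivial conjugacy classes (represented by a
finset of pairwise non-conjugate nontrivial elements, pairwise invariably
generating `G`) has size at most the size of any normal covering of `G` by
proper subgroups. -/
theorem clique_le_normal_covering (G : Type*) [Group G] [Finite G] (hnc : ¬ IsCyclic G)
    (n : ℕ) (H : Fin n → Subgroup G) (hprop : ∀ i, H i ≠ ⊤)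
    (hcov : ∀ x : G, ∃ (i : Fin n) (g : G), g⁻¹ * x * g ∈ H i)
    (s : Finset G) (h1 : ∀ x ∈ s, x ≠ 1)
    (hconj : ∀ x ∈ s, ∀ y ∈ s, x ≠ y → ¬ IsConj x y)
    (hgen : ∀ x ∈ s, ∀ y ∈ s, x ≠ y →
      ∀ g h : G, Subgroup.closure ({g * x * g⁻¹, h * y * h⁻¹} : Set G) = ⊤) :
    s.card ≤ n := by
  classical
  choose f g hfg using hcov
  have hinj : Set.InjOn f s := by
    intro x hx y hy hxy
    by_contra hne
    have hgen' := hgen x hx y hy hne (g x)⁻¹ (g y)⁻¹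
    simp only [inv_inv] at hgen'
    have hle : Subgroup.closure ({(g x)⁻¹ * x * g x, (g y)⁻¹ * y * g y} : Set G) ≤ H (f x) := by
      rw [Subgroup.closure_le]
      intro z hz
      rcases hz with hz | hz
      · rw [hz]; exact hfg x
      · rw [Set.mem_singleton_iff] at hz
        rw [hz, hxy]; exact hfg y
    rw [hgen'] at hle
    exact hprop (f x) (top_le_iff.mp hle)
  calc s.card = (s.image f).card := (Finset.card_image_of_injOn hinj).symm
    _ ≤ (Finset.univ : Finset (Fin n)).card := Finset.card_le_card (Finset.subset_univ _)
    _ = n := Finset.card_univ.trans (Fintype.card_fin n)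
end

section
/- Let q be a power of a prime p and let ℓ ≥ 3 be a divisor of q − 1 (if q is even) or of (q − 1)/2 (if q is odd). Let x ∈ PSL(2, q) have order ℓ. Then the conjugacy class of x intersected with ⟨x⟩ equals {x, x⁻¹}. -/
/-!
Lift `x` to `B ∈ SL₂(q)`. Then `B ^ ℓ = ±1`, so an eigenvalue `λ` of `B` (over an algebraic
closure) satisfies `λ ^ (ℓ · gcd(2, q - 1)) = 1`, hence `λ ^ (q - 1) = 1` and `λ ∈ 𝔽_q`.
Moreover `λ ≠ ±1`: otherwise `B` is `±` a unipotent matrix, so `x ^ p = 1`, which is impossible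
for an element of order `ℓ ∣ q - 1`. A matrix of `SL₂(q)` with distinct eigenvalues `λ, λ⁻¹`
in `𝔽_q` is conjugate in `SL₂(q)` to `diag(λ, λ⁻¹)`, so we may assume that `x` lies in the image
of the diagonal torus. There the trace of a lift is defined up to sign, and `t + t⁻¹` determines
`t` up to inversion, so a power `x ^ k` conjugate to `x` is `x` or `x⁻¹`; conversely the Weyl
element `!![0, 1; -1, 0]` conjugates `x` to `x⁻¹`.
-/

open Matrix Subgroup
open scoped MatrixGroups

theorem MulEquiv.image_conjugatesOf_inter_zpowers {G H : Type*} [Group G] [Group H]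
    (e : G ≃* H) (x : G) :
    e '' (conjugatesOf x ∩ zpowers x) = conjugatesOf (e x) ∩ zpowers (e x) := by
  have hzpowers : e '' (zpowers x : Set G) = zpowers (e x) := by
    rw [← MonoidHom.coe_coe e, ← coe_map, MonoidHom.map_zpowers]
  have hconj : e '' conjugatesOf x = conjugatesOf (e x) := by
    ext y
    obtain ⟨y, rfl⟩ := e.surjective y
    refine ⟨?_, fun h => ⟨y, (by simpa using (e.symm : H →* G).map_isConj h : IsConj x y), rfl⟩⟩
    rintro ⟨z, hz, hzy⟩
    rw [← hzy]
    exact (e : G →* H).map_isConj hz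
  rw [Set.image_inter e.injective, hconj, hzpowers]

theorem QuotientGroup.exists_isConj_mul_of_isConj_mk {G : Type*} [Group G] {N : Subgroup G}
    [N.Normal] {a b : G} (h : IsConj (a : G ⧸ N) b) : ∃ n ∈ N, IsConj a (n * b) := by
  obtain ⟨c, hc⟩ := isConj_iff.mp h
  obtain ⟨g, rfl⟩ := QuotientGroup.mk_surjective c
  refine ⟨g * a * g⁻¹ * b⁻¹, ?_, isConj_iff.mpr ⟨g, by group⟩⟩
  rw [← QuotientGroup.eq_one_iff]
  simp [hc]

theorem eq_or_eq_inv_of_add_inv_eq_add_inv {K : Type*} [Field K] {a b : K} (ha : a ≠ 0)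
    (hb : b ≠ 0) (h : a + a⁻¹ = b + b⁻¹) : a = b ∨ a = b⁻¹ := by
  have : (a - b) * (a - b⁻¹) = 0 := by
    linear_combination a * h + mul_inv_cancel₀ hb - mul_inv_cancel₀ ha
  simpa [sub_eq_zero] using this

theorem FiniteField.mem_range_of_pow_card_eq {F K : Type*} [Field F] [Fintype F] [Field K]
    (i : F →+* K) {x : K} (hx : x ^ Fintype.card F = x) : x ∈ i.range := by
  have hsplit := Polynomial.splits_X_pow_nat_card_sub_X (K := F)
  rw [Nat.card_eq_fintype_card] at hsplit
  exact hsplit.mem_range_of_isRoot (X_pow_card_sub_X_ne_zero F Fintype.one_lt_card)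
    (by simp [hx])

theorem Module.End.HasEigenvector.pow_eq_of_pow_eq_scalar {n K : Type*} [Fintype n]
    [DecidableEq n] [Field K] {M : Matrix n n K} {c r : K} {v : n → K}
    (hv : Module.End.HasEigenvector (toLin' M) c v) {k : ℕ} (hk : M ^ k = scalar n r) :
    c ^ k = r := by
  have h := hv.pow_apply k
  rw [← toLin'_pow, hk, toLin'_apply, scalar_apply, ← smul_one_eq_diagonal, smul_mulVec,
    one_mulVec] at h
  exact smul_left_injective K hv.2 h.symm

namespace Matrix

theorem det_sub_smul_one_fin_two {R : Type*} [CommRing R] (M : Matrix (Fin 2) (Fin 2) R)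
    (c : R) : (M - c • 1).det = c ^ 2 - M.trace * c + M.det := by
  simp [det_fin_two, trace_fin_two]
  ring

variable {K : Type*} [Field K]

theorem exists_mulVec_eq_smul_iff_fin_two (M : Matrix (Fin 2) (Fin 2) K) (c : K) :
    (∃ v ≠ 0, M *ᵥ v = c • v) ↔ c ^ 2 - M.trace * c + M.det = 0 := by
  rw [← det_sub_smul_one_fin_two, ← exists_mulVec_eq_zero_iff]
  simp only [sub_mulVec, smul_mulVec, one_mulVec, sub_eq_zero]

theorem exists_det_eq_one_mul_eq_mul_diag_fin_two (M : Matrix (Fin 2) (Fin 2) K) {a b : K}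
    (hab : a ≠ b) (ha : a ^ 2 - M.trace * a + M.det = 0) (hb : b ^ 2 - M.trace * b + M.det = 0) :
    ∃ P : Matrix (Fin 2) (Fin 2) K, P.det = 1 ∧ M * P = P * !![a, 0; 0, b] := by
  obtain ⟨v, hv0, hv⟩ := (exists_mulVec_eq_smul_iff_fin_two M a).mpr ha
  obtain ⟨w, hw0, hw⟩ := (exists_mulVec_eq_smul_iff_fin_two M b).mpr hb
  have hli : LinearIndependent K ![v, w] :=
    Module.End.eigenvectors_linearIndependent' (toLin' M) ![a, b]
      (by intro i j; fin_cases i <;> fin_cases j <;> simp [hab, hab.symm]) ![v, w]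
      (Fin.forall_fin_two.mpr
        ⟨⟨Module.End.mem_eigenspace_iff.mpr (by rw [toLin'_apply]; exact hv), hv0⟩,
          ⟨Module.End.mem_eigenspace_iff.mpr (by rw [toLin'_apply]; exact hw), hw0⟩⟩)
  have hδ : v 0 * w 1 - v 1 * w 0 ≠ 0 := by
    have := (linearIndependent_rows_iff_isUnit (A := of ![v, w])).mp hli
    simpa [isUnit_iff_isUnit_det, det_fin_two] using this
  set δ := v 0 * w 1 - v 1 * w 0 with hδ_def
  -- columns: eigenvectors for `a` and `b`, the second rescaled so that the determinant is `1`
  refine ⟨!![v 0, δ⁻¹ * w 0; v 1, δ⁻¹ * w 1], ?_, ?_⟩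
  · rw [det_fin_two_of]
    field_simp
    rw [hδ_def]
    ring
  · obtain ⟨hv₀, hv₁⟩ := Fin.forall_fin_two.mp (congrFun hv)
    obtain ⟨hw₀, hw₁⟩ := Fin.forall_fin_two.mp (congrFun hw)
    simp only [mulVec, dotProduct, Fin.sum_univ_two, Pi.smul_apply, smul_eq_mul] at hv₀ hv₁ hw₀ hw₁
    ext i j
    fin_cases i <;> fin_cases j <;> simp [mul_apply, Fin.sum_univ_two]
    · linear_combination hv₀
    · linear_combination δ⁻¹ * hw₀
    · linear_combination hv₁
    · linear_combination δ⁻¹ * hw₁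

end Matrix

namespace Matrix.SpecialLinearGroup

theorem trace_eq_of_isConj {n R : Type*} [Fintype n] [DecidableEq n] [CommRing R]
    {A B : SpecialLinearGroup n R} (h : IsConj A B) :
    trace (A : Matrix n n R) = trace (B : Matrix n n R) := by
  obtain ⟨c, rfl⟩ := isConj_iff.mp h
  rw [coe_mul, coe_mul, trace_mul_cycle, ← coe_mul, inv_mul_cancel, coe_one, one_mul]

section CommRing

variable {R : Type*} [CommRing R]

def torus : Rˣ →* SL(2, R) where
  toFun a := ⟨!![(a : R), 0; 0, ((a⁻¹ : Rˣ) : R)], by simp⟩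
  map_one' := by ext i j; fin_cases i <;> fin_cases j <;> simp
  map_mul' a b := Subtype.ext <| show _ = (_ : Matrix (Fin 2) (Fin 2) R) * _ by simp [mul_comm]

@[simp]
theorem coe_torus (a : Rˣ) :
    (torus a : Matrix (Fin 2) (Fin 2) R) = !![(a : R), 0; 0, ((a⁻¹ : Rˣ) : R)] := rfl

theorem trace_torus (a : Rˣ) : trace (torus a : Matrix (Fin 2) (Fin 2) R) = a + (a⁻¹ : Rˣ) := by
  simp [trace_fin_two]

theorem isConj_torus_inv (a : Rˣ) : IsConj (torus a) (torus a⁻¹) := by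
  let w : SL(2, R) := ⟨!![0, 1; -1, 0], by simp⟩
  refine isConj_iff.mpr ⟨w, mul_inv_eq_iff_eq_mul.mpr (Subtype.ext ?_)⟩
  show (_ : Matrix (Fin 2) (Fin 2) R) * _ = _ * _
  simp [w, coe_inv, adjugate_fin_two]

theorem center_le_range_torus : center SL(2, R) ≤ (torus : Rˣ →* SL(2, R)).range := by
  intro z hz
  obtain ⟨r, hr, hz⟩ := mem_center_iff.mp hz
  have hrr : r * r = 1 := by rw [← sq, ← Fintype.card_fin 2, hr]
  refine ⟨⟨r, r, hrr, hrr⟩, Subtype.ext ?_⟩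
  rw [coe_torus, ← hz]
  ext i j; fin_cases i <;> fin_cases j <;> simp

end CommRing

variable {K : Type*} [Field K]

theorem isConj_torus_of_trace_eq {B : SL(2, K)} {a : Kˣ} (ha : a ≠ a⁻¹)
    (ht : trace (B : Matrix (Fin 2) (Fin 2) K) = a + (a : K)⁻¹) : IsConj (torus a) B := by
  have ha' : (a : K) ≠ (a : K)⁻¹ := by simpa using Units.val_injective.ne ha
  have ha0 : (a : K) ≠ 0 := a.ne_zero
  have hdet : (B : Matrix (Fin 2) (Fin 2) K).det = 1 := B.2
  obtain ⟨P, hP, hBP⟩ := exists_det_eq_one_mul_eq_mul_diag_fin_two (B : Matrix (Fin 2) (Fin 2) K)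
    ha' (by rw [ht, hdet]; field_simp; ring) (by rw [ht, hdet]; field_simp; ring)
  refine isConj_iff.mpr ⟨⟨P, hP⟩, mul_inv_eq_iff_eq_mul.mpr (Subtype.ext ?_)⟩
  show (_ : Matrix (Fin 2) (Fin 2) K) * _ = _ * _
  simpa using hBP.symm

theorem pow_char_mem_center_of_trace_eq (p : ℕ) [Fact p.Prime] [CharP K p] {B : SL(2, K)}
    {a : K} (ha : a ^ 2 = 1) (ht : trace (B : Matrix (Fin 2) (Fin 2) K) = 2 * a) :
    B ^ p ∈ center SL(2, K) := by
  set M := (B : Matrix (Fin 2) (Fin 2) K)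
  have hdet : M.det = 1 := B.2
  rw [det_fin_two] at hdet
  rw [trace_fin_two] at ht
  set N := M - a • 1 with hN_def
  have hN : N ^ 2 = 0 := by
    ext i j
    fin_cases i <;> fin_cases j <;> simp [N, sq, mul_apply, Fin.sum_univ_two]
    · linear_combination M 0 0 * ht - hdet + ha
    · linear_combination M 0 1 * ht
    · linear_combination M 1 0 * ht
    · linear_combination M 1 1 * ht - hdet + ha
  have hMp : M ^ p = a ^ p • 1 := by
    have hc : Commute (a • (1 : Matrix (Fin 2) (Fin 2) K)) N := (Commute.one_left N).smul_left a
    rw [show M = a • 1 + N by rw [hN_def]; abel, add_pow_char_of_commute p hc, smul_pow, one_pow,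
      pow_eq_zero_of_le (Fact.out : p.Prime).two_le hN, add_zero]
  refine mem_center_iff.mpr
    ⟨a ^ p, by rw [Fintype.card_fin, ← pow_mul, mul_comm, pow_mul, ha, one_pow], ?_⟩
  rw [coe_pow, hMp, scalar_apply, smul_one_eq_diagonal]

theorem isConj_coe_torus_iff {a b : Kˣ} :
    IsConj (torus a : PSL(2, K)) (torus b) ↔
      (torus b : PSL(2, K)) = torus a ∨ (torus b : PSL(2, K)) = torus a⁻¹ := by
  constructor
  · intro h
    obtain ⟨z, hz, hconj⟩ := QuotientGroup.exists_isConj_mul_of_isConj_mk h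
    obtain ⟨r, rfl⟩ := center_le_range_torus hz
    have hb : (torus b : PSL(2, K)) = torus (r * b) := by
      rw [map_mul, QuotientGroup.mk_mul, (QuotientGroup.eq_one_iff _).mpr hz, one_mul]
    have htr := trace_eq_of_isConj hconj
    rw [← map_mul, trace_torus, trace_torus] at htr
    rw [hb]
    rcases eq_or_eq_inv_of_add_inv_eq_add_inv (r * b).ne_zero a.ne_zero (by simpa using htr.symm)
      with h | h
    · rw [show r * b = a from Units.ext h]
      exact Or.inl rfl
    · rw [show r * b = a⁻¹ from Units.ext (by simpa using h)]
      exact Or.inr rfl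
  · rintro (h | h)
    · rw [h]
    · rw [h]
      simpa using (QuotientGroup.mk' (center SL(2, K))).map_isConj (isConj_torus_inv a)

theorem conjugatesOf_inter_zpowers_coe_torus (a : Kˣ) :
    conjugatesOf (torus a : PSL(2, K)) ∩ zpowers (torus a : PSL(2, K)) =
      {(torus a : PSL(2, K)), (torus a : PSL(2, K))⁻¹} := by
  ext y
  constructor
  · rintro ⟨hconj, hy⟩
    obtain ⟨k, rfl⟩ := mem_zpowers_iff.mp hy
    rw [← QuotientGroup.mk_zpow, ← map_zpow] at hconj ⊢
    simpa using isConj_coe_torus_iff.mp hconj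
  · rintro (rfl | rfl)
    · exact ⟨IsConj.refl _, mem_zpowers _⟩
    · refine ⟨?_, inv_mem (mem_zpowers _)⟩
      rw [← QuotientGroup.mk_inv, ← map_inv]
      exact isConj_coe_torus_iff.mpr (Or.inr rfl)

section Finite

variable {F : Type*} [Field F] [Fintype F]

theorem exists_trace_eq_add_inv_of_pow_mem_center {B : SL(2, F)} {n : ℕ}
    (hB : B ^ n ∈ center SL(2, F))
    (hn : Nat.gcd 2 (Fintype.card F - 1) * n ∣ Fintype.card F - 1) :
    ∃ a : Fˣ, trace (B : Matrix (Fin 2) (Fin 2) F) = a + (a : F)⁻¹ := by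
  obtain ⟨r, hr2, hr⟩ := mem_center_iff.mp hB
  rw [Fintype.card_fin] at hr2
  let f := algebraMap F (AlgebraicClosure F)
  let M := (B : Matrix (Fin 2) (Fin 2) F).map f
  obtain ⟨c, hc⟩ := Module.End.exists_eigenvalue (Matrix.toLin' M)
  obtain ⟨v, hv⟩ := hc.exists_hasEigenvector
  have hcn : c ^ n = f r := hv.pow_eq_of_pow_eq_scalar (by
    rw [← Matrix.map_pow, ← coe_pow, ← hr, scalar_apply, diagonal_map (map_zero f)]
    rfl)
  have hrg : r ^ Nat.gcd 2 (Fintype.card F - 1) = 1 :=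
    pow_gcd_eq_one.mpr ⟨hr2, FiniteField.pow_card_sub_one_eq_one r (by rintro rfl; simp at hr2)⟩
  have hcq : c ^ Fintype.card F = c := by
    obtain ⟨k, hk⟩ := hn
    have hc1 : c ^ (Fintype.card F - 1) = 1 := by
      rw [hk, mul_comm _ n, pow_mul, pow_mul, hcn, ← map_pow, hrg, map_one, one_pow]
    rw [← Nat.sub_add_cancel Fintype.card_pos, pow_succ, hc1, one_mul]
  obtain ⟨a, rfl⟩ := FiniteField.mem_range_of_pow_card_eq f hcq
  have ha : a ^ 2 - trace (B : Matrix (Fin 2) (Fin 2) F) * a + 1 = 0 := by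
    have hM : M.det = 1 := by simpa [B.2] using (f.map_det (B : Matrix (Fin 2) (Fin 2) F)).symm
    have htM : M.trace = f (trace (B : Matrix (Fin 2) (Fin 2) F)) :=
      (AddMonoidHom.map_trace f _).symm
    have := (exists_mulVec_eq_smul_iff_fin_two M (f a)).mp
      ⟨v, hv.2, by simpa using hv.apply_eq_smul⟩
    rw [htM, hM] at this
    apply f.injective
    simpa using this
  have ha0 : a ≠ 0 := by rintro rfl; simp at ha
  exact ⟨Units.mk0 a ha0, by simp; field_simp; linear_combination -ha⟩

theorem coe_eq_one_of_trace_eq_two_mul {B : SL(2, F)}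
    (hB : (B : PSL(2, F)) ^ (Fintype.card F - 1) = 1) {a : F} (ha : a ^ 2 = 1)
    (ht : trace (B : Matrix (Fin 2) (Fin 2) F) = 2 * a) : (B : PSL(2, F)) = 1 := by
  have : Fact (ringChar F).Prime := ⟨CharP.char_is_prime F _⟩
  have hp : (B : PSL(2, F)) ^ ringChar F = 1 := by
    rw [← QuotientGroup.mk_pow, QuotientGroup.eq_one_iff]
    exact pow_char_mem_center_of_trace_eq _ ha ht
  have hq : (B : PSL(2, F)) ^ Fintype.card F = 1 := orderOf_dvd_iff_pow_eq_one.mp <|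
    (orderOf_dvd_of_pow_eq_one hp).trans <|
      (CharP.cast_eq_zero_iff F _ _).mp (FiniteField.cast_card_eq_zero F)
  rwa [← Nat.sub_add_cancel Fintype.card_pos, pow_succ, hB, one_mul] at hq

end Finite

end Matrix.SpecialLinearGroup

open Matrix.SpecialLinearGroup in
/-- Let `ℓ ≥ 3` divide `(q-1)/gcd(2,q-1)` and let `x ∈ PSL₂(q)` have order `ℓ`.
Then the conjugacy class of `x` meets `⟨x⟩` exactly in `{x, x⁻¹}`. -/
theorem psl2_class_meet_cyclic (F : Type*) [Field F] [Fintype F]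
    (ℓ : ℕ) (hℓ : 3 ≤ ℓ)
    (hdvd : ℓ ∣ (Fintype.card F - 1) / Nat.gcd 2 (Fintype.card F - 1))
    (x : Matrix.ProjectiveSpecialLinearGroup (Fin 2) F) (hx : orderOf x = ℓ) :
    {y : Matrix.ProjectiveSpecialLinearGroup (Fin 2) F | IsConj x y} ∩
        (Subgroup.zpowers x : Set (Matrix.ProjectiveSpecialLinearGroup (Fin 2) F)) =
      {x, x⁻¹} := by
  obtain ⟨B, rfl⟩ := QuotientGroup.mk_surjective x
  have hℓ_dvd : Nat.gcd 2 (Fintype.card F - 1) * ℓ ∣ Fintype.card F - 1 :=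
    Nat.mul_dvd_of_dvd_div (Nat.gcd_dvd_right _ _) hdvd
  have hBℓ : B ^ ℓ ∈ center SL(2, F) := by
    rw [← QuotientGroup.eq_one_iff, QuotientGroup.mk_pow, ← hx, pow_orderOf_eq_one]
  obtain ⟨a, ht⟩ := exists_trace_eq_add_inv_of_pow_mem_center hBℓ hℓ_dvd
  have ha : a ≠ a⁻¹ := by
    intro ha
    have ha' : (a : F) = (a : F)⁻¹ := by simpa using congrArg Units.val ha
    have hB1 := coe_eq_one_of_trace_eq_two_mul (B := B)
      (orderOf_dvd_iff_pow_eq_one.mp (hx ▸ dvd_of_mul_left_dvd hℓ_dvd)) (a := (a : F))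
      (by rw [sq]; nth_rw 2 [ha']; exact mul_inv_cancel₀ a.ne_zero) (by rw [ht, ← ha']; ring)
    rw [hB1, orderOf_one] at hx
    omega
  obtain ⟨c, rfl⟩ := isConj_iff.mp (isConj_torus_of_trace_eq ha ht)
  have hconj : ((c * torus a * c⁻¹ : SL(2, F)) : PSL(2, F)) =
      MulAut.conj (c : PSL(2, F)) (torus a) := by
    simp
  change conjugatesOf _ ∩ _ = _
  rw [hconj, ← MulEquiv.image_conjugatesOf_inter_zpowers, conjugatesOf_inter_zpowers_coe_torus,
    Set.image_pair, map_inv]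
end

section
/- Let q ≥ 4 be a power of 2. Then the number of conjugacy classes of SL(2, q) is q + 1. -/
/-!
Every non-scalar `A ∈ SL(2, F)` has a cyclic vector `v`, and in the basis `v, Av` it becomes the
companion matrix `!![0, -1; 1, tr A]`. The change of basis lies in `GL(2, F)`, but when every
element of `F` is a square it can be rescaled into `SL(2, F)`; in characteristic `2` this holds for
finite `F`, and the only scalar matrix of determinant `1` is `1`. So the conjugacy classes are the
class of `1` together with one class for each trace `t ∈ F`, the trace separating them: `q + 1` in
all.
-/

namespace Matrix

variable {R : Type*} [CommRing R]

theorem SpecialLinearGroup.trace_eq_of_isConj_s18 {n : Type*} [Fintype n] [DecidableEq n]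
    {A B : SpecialLinearGroup n R} (h : IsConj A B) :
    trace (A : Matrix n n R) = trace (B : Matrix n n R) := by
  obtain ⟨c, rfl⟩ := isConj_iff.mp h
  rw [SpecialLinearGroup.coe_mul, SpecialLinearGroup.coe_mul, trace_mul_cycle,
    ← SpecialLinearGroup.coe_mul, inv_mul_cancel, SpecialLinearGroup.coe_one, one_mul]

theorem SpecialLinearGroup.isConj_of_mul_eq_mul {n : Type*} [Fintype n] [DecidableEq n]
    {A B : SpecialLinearGroup n R} (P : Matrix n n R) {c : R}
    (hc : c ^ Fintype.card n * P.det = 1) (h : P * A = B * P) : IsConj A B := by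
  let Q : SpecialLinearGroup n R := ⟨c • P, by rwa [det_smul]⟩
  refine isConj_iff.mpr ⟨Q, mul_inv_eq_of_eq_mul (Subtype.ext ?_)⟩
  change c • P * A = B * (c • P)
  rw [Matrix.smul_mul, Matrix.mul_smul, h]

def krylovMatrix (M : Matrix (Fin 2) (Fin 2) R) (v : Fin 2 → R) : Matrix (Fin 2) (Fin 2) R :=
  (of ![v, M *ᵥ v])ᵀ

-- Cayley–Hamilton: `M ^ 2 * v = trace M • M *ᵥ v - det M • v`.
theorem mul_krylovMatrix (M : Matrix (Fin 2) (Fin 2) R) (v : Fin 2 → R) :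
    M * krylovMatrix M v = krylovMatrix M v * !![0, -M.det; 1, M.trace] := by
  ext i j
  fin_cases i <;> fin_cases j <;>
    simp [krylovMatrix, mul_apply, Fin.sum_univ_two, det_fin_two, trace_fin_two] <;> ring

theorem exists_det_krylovMatrix_ne_zero {M : Matrix (Fin 2) (Fin 2) R}
    (hM : ∀ a, M ≠ scalar (Fin 2) a) : ∃ v, (krylovMatrix M v).det ≠ 0 := by
  -- the determinants at `e₀`, `e₁`, `e₀ + e₁` are `M 1 0`, `-M 0 1`, `M 1 1 - M 0 0`
  by_contra! h
  have h₁ := h ![1, 0]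
  have h₂ := h ![0, 1]
  have h₃ := h ![1, 1]
  simp [krylovMatrix, det_fin_two] at h₁ h₂ h₃
  apply hM (M 0 0)
  ext i j
  fin_cases i <;> fin_cases j <;> simp <;> grind

namespace SpecialLinearGroup

def sl2Companion (t : R) : SpecialLinearGroup (Fin 2) R :=
  ⟨!![0, -1; 1, t], by simp [det_fin_two_of]⟩

@[simp]
theorem trace_sl2Companion (t : R) : trace (sl2Companion t : Matrix (Fin 2) (Fin 2) R) = t := by
  simp [sl2Companion, trace_fin_two]

theorem sl2Companion_ne_one [Nontrivial R] (t : R) : sl2Companion t ≠ 1 := by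
  intro h
  simpa [sl2Companion] using congr_arg (fun A : SpecialLinearGroup (Fin 2) R => A 1 0) h

theorem eq_one_of_coe_eq_scalar_of_charTwo [IsReduced R] [CharP R 2]
    {A : SpecialLinearGroup (Fin 2) R} {a : R}
    (hA : (A : Matrix (Fin 2) (Fin 2) R) = scalar (Fin 2) a) : A = 1 := by
  have ha : a ^ 2 = 1 := by simpa [hA] using A.det_coe
  -- in characteristic `2`, `(a - 1) ^ 2 = a ^ 2 - 1`
  have ha₁ : (a - 1) ^ 2 = 0 := by
    linear_combination ha + (1 - a) * CharTwo.two_eq_zero (R := R)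
  ext : 1
  rw [hA, sub_eq_zero.mp (IsReduced.eq_zero _ ⟨2, ha₁⟩), map_one, coe_one]

theorem isConj_sl2Companion_trace {F : Type*} [Field F] (hsq : ∀ a : F, IsSquare a)
    {A : SpecialLinearGroup (Fin 2) F}
    (hA : ∀ a, (A : Matrix (Fin 2) (Fin 2) F) ≠ scalar (Fin 2) a) :
    IsConj (sl2Companion (trace (A : Matrix (Fin 2) (Fin 2) F))) A := by
  obtain ⟨v, hv⟩ := exists_det_krylovMatrix_ne_zero hA
  obtain ⟨c, hc⟩ := hsq (krylovMatrix (A : Matrix (Fin 2) (Fin 2) F) v).det⁻¹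
  refine isConj_of_mul_eq_mul (krylovMatrix A v) (c := c) ?_ ?_
  · rw [Fintype.card_fin, sq, ← hc, inv_mul_cancel₀ hv]
  · rw [mul_krylovMatrix, A.det_coe]
    rfl

theorem card_conjClasses_sl2_of_charTwo (F : Type*) [Field F] [Fintype F] [CharP F 2] :
    Nat.card (ConjClasses (SpecialLinearGroup (Fin 2) F)) = Fintype.card F + 1 := by
  let f : Option F → ConjClasses (SpecialLinearGroup (Fin 2) F) :=
    Option.elim' (ConjClasses.mk 1) (ConjClasses.mk ∘ sl2Companion)
  have hinj : f.Injective := by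
    rintro (_ | s) (_ | t) h <;>
      simp only [f, Option.elim'_none, Option.elim'_some, Function.comp_apply,
        ConjClasses.mk_eq_mk_iff_isConj, isConj_one_left, isConj_one_right] at h
    · rfl
    · exact (sl2Companion_ne_one t h).elim
    · exact (sl2Companion_ne_one s h).elim
    · simpa using trace_eq_of_isConj_s18 h
  have hsurj : f.Surjective := by
    intro x
    obtain ⟨A, rfl⟩ := ConjClasses.mk_surjective x
    by_cases hA : ∃ a, (A : Matrix (Fin 2) (Fin 2) F) = scalar (Fin 2) a
    · obtain ⟨a, ha⟩ := hA
      exact ⟨none, by simp [f, eq_one_of_coe_eq_scalar_of_charTwo ha]⟩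
    · push Not at hA
      exact ⟨some (trace (A : Matrix (Fin 2) (Fin 2) F)), ConjClasses.mk_eq_mk_iff_isConj.mpr
        (isConj_sl2Companion_trace isSquare_of_charTwo' hA)⟩
  rw [← Nat.card_eq_of_bijective f ⟨hinj, hsurj⟩, Nat.card_eq_fintype_card,
    Fintype.card_option]

end SpecialLinearGroup

end Matrix

theorem sl2_num_conjClasses_char_two_general (q : ℕ) (hpow : ∃ k : ℕ, q = 2 ^ k)
    (F : Type*) [Field F] [Fintype F] (hcard : Fintype.card F = q) :
    Nat.card (ConjClasses (Matrix.SpecialLinearGroup (Fin 2) F)) = q + 1 := by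
  obtain ⟨k, rfl⟩ := hpow
  have : CharP F 2 := charP_of_card_eq_prime_pow hcard
  rw [Matrix.SpecialLinearGroup.card_conjClasses_sl2_of_charTwo, hcard]

theorem sl2_num_conjClasses_char_two (q : ℕ) (hq : 4 ≤ q) (hpow : ∃ k : ℕ, q = 2 ^ k)
    (F : Type*) [Field F] [Fintype F] (hcard : Fintype.card F = q) :
    Nat.card (ConjClasses (Matrix.SpecialLinearGroup (Fin 2) F)) = q + 1 :=
  sl2_num_conjClasses_char_two_general q hpow F hcard
end
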